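/- (Consistency of the empirical geometric median with exponential rate.) Let (Ỹ, d) be a compact metric space and μ a probability measure on Ỹ. Suppose y* is the unique minimizer of y ↦ ∫ d(y', y) dμ(y'), and that for every y ∈ Ỹ the random variable Z_y := d(Y, y*) − d(Y, y) (with Y ∼ μ) has finite moment generating function on all of ℝ. Let y₁,…,y_m be i.i.d. with law μ and ŷ_m a minimizer of y ↦ (1/m)∑ᵢ d(yᵢ, y). Then for every ε > 0 there exist M ∈ ℕ, K > 0, and η > 0 such that for all m > M, Pr(d(ŷ_m, y*) ≥ ε) ≤ K exp(−mη). -/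

import Mathlib

/-!
Every `y` at distance at least `ε` from `y*` has a positive risk gap
`Δ y = ∫ d(·, y) dμ - ∫ d(·, y*) dμ`. The empirical risk is 1-Lipschitz, so if the empirical
median lies within `Δ y / 2` of `y`, the empirical mean of the bounded variable
`d(Y, y*) - d(Y, y)`, whose mean is `-Δ y`, exceeds its mean by at least `Δ y / 2`; by
Hoeffding's inequality this has probability at most `exp (-m η_y)`. The set
`{y | ε ≤ d(y, y*)}` is compact, so finitely many such balls cover it, and a union bound
concludes.
-/

open MeasureTheory ProbabilityTheory Finset
open scoped NNReal

section Decay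

variable {Ω : Type*} [MeasurableSpace Ω] (P : Measure Ω)

def DecaysExponentially (E : ℕ → Set Ω) : Prop :=
  ∃ K η : ℝ, 0 < K ∧ 0 < η ∧ ∀ m : ℕ, P.real (E m) ≤ K * Real.exp (-m * η)

variable {P}

lemma DecaysExponentially.mono [IsFiniteMeasure P] {E F : ℕ → Set Ω}
    (hF : DecaysExponentially P F) (hEF : ∀ m, E m ⊆ F m) : DecaysExponentially P E := by
  obtain ⟨K, η, hK, hη, hbound⟩ := hF
  exact ⟨K, η, hK, hη, fun m => (measureReal_mono (hEF m)).trans (hbound m)⟩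

lemma DecaysExponentially.union {E F : ℕ → Set Ω} (hE : DecaysExponentially P E)
    (hF : DecaysExponentially P F) : DecaysExponentially P (fun m => E m ∪ F m) := by
  obtain ⟨K, η, hK, hη, hE⟩ := hE
  obtain ⟨K', η', hK', hη', hF⟩ := hF
  refine ⟨K + K', min η η', by positivity, lt_min hη hη', fun m => ?_⟩
  have hexp : ∀ θ, min η η' ≤ θ → Real.exp (-m * θ) ≤ Real.exp (-m * min η η') := fun θ hθ =>
    Real.exp_le_exp.mpr (by nlinarith [m.cast_nonneg (α := ℝ)])
  calc P.real (E m ∪ F m) ≤ P.real (E m) + P.real (F m) := measureReal_union_le _ _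
    _ ≤ K * Real.exp (-m * η) + K' * Real.exp (-m * η') := add_le_add (hE m) (hF m)
    _ ≤ K * Real.exp (-m * min η η') + K' * Real.exp (-m * min η η') :=
      add_le_add (mul_le_mul_of_nonneg_left (hexp _ (min_le_left _ _)) hK.le)
        (mul_le_mul_of_nonneg_left (hexp _ (min_le_right _ _)) hK'.le)
    _ = (K + K') * Real.exp (-m * min η η') := by ring

lemma decaysExponentially_biUnion {ι : Type*} (s : Finset ι) {E : ι → ℕ → Set Ω}
    (hE : ∀ j ∈ s, DecaysExponentially P (E j)) :
    DecaysExponentially P (fun m => ⋃ j ∈ s, E j m) := by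
  classical
  induction s using Finset.induction_on with
  | empty => exact ⟨1, 1, one_pos, one_pos, fun m => by simp; positivity⟩
  | insert a s _ ih =>
    simp only [Finset.set_biUnion_insert]
    exact (hE a (mem_insert_self a s)).union (ih fun j hj => hE j (mem_insert_of_mem hj))

end Decay

section Hoeffding

variable {Ω X : Type*} [MeasurableSpace Ω] [MeasurableSpace X] {P : Measure Ω}
  [IsProbabilityMeasure P] {μ : Measure X} {Ys : ℕ → Ω → X}

lemma measureReal_sum_ge_le_exp_of_iid (hmeas : ∀ i, Measurable (Ys i))
    (hindep : iIndepFun Ys P) (hlaw : ∀ i, P.map (Ys i) = μ) {f : X → ℝ} (hf : Measurable f)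
    {r : ℝ≥0} (hfr : ∀ x, |f x| ≤ r) {t : ℝ} (ht : 0 ≤ t) (m : ℕ) :
    P.real {ω | m * (∫ x, f x ∂μ + t) ≤ ∑ i ∈ range m, f (Ys i ω)} ≤
      Real.exp (-m * (t ^ 2 / (2 * r ^ 2))) := by
  have hmean : ∀ i, P[f ∘ Ys i] = ∫ x, f x ∂μ := fun i => by
    rw [← hlaw i, integral_map (hmeas i).aemeasurable hf.aestronglyMeasurable]
    rfl
  have hsubG : ∀ i, HasSubgaussianMGF (fun ω => f (Ys i ω) - ∫ x, f x ∂μ) (r ^ 2) P := by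
    intro i
    have hr : ‖(r : ℝ) - -r‖₊ / 2 = r := NNReal.eq <| by
      rw [NNReal.coe_div, coe_nnnorm, sub_neg_eq_add, Real.norm_of_nonneg (by positivity)]
      push_cast
      ring
    have h := hasSubgaussianMGF_of_mem_Icc (μ := P) (X := f ∘ Ys i) (a := -r) (b := r)
      (hf.comp (hmeas i)).aemeasurable (ae_of_all _ fun ω => abs_le.mp (hfr _))
    rwa [hmean, hr] at h
  have hindep' : iIndepFun (fun i ω => f (Ys i ω) - ∫ x, f x ∂μ) P :=
    hindep.comp (fun _ x => f x - ∫ x, f x ∂μ) fun _ => hf.sub_const _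
  have h := HasSubgaussianMGF.measure_sum_range_ge_le_of_iIndepFun hindep' (n := m)
    (fun i _ => hsubG i) (mul_nonneg m.cast_nonneg ht)
  convert h using 2
  · ext ω
    simp only [Set.mem_ofPred_eq, sum_sub_distrib, sum_const, card_range, nsmul_eq_mul]
    constructor <;> intro <;> linarith
  · rcases eq_or_ne (m : ℝ) 0 with hm | hm
    · simp [hm]
    · push_cast
      rw [mul_pow, ← mul_div_mul_left (t ^ 2) (2 * (r : ℝ) ^ 2) hm]
      ring

lemma decaysExponentially_sum_ge_of_iid (hmeas : ∀ i, Measurable (Ys i))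
    (hindep : iIndepFun Ys P) (hlaw : ∀ i, P.map (Ys i) = μ) {f : X → ℝ} (hf : Measurable f)
    {r : ℝ≥0} (hfr : ∀ x, |f x| ≤ r) (hr : 0 < r) {t : ℝ} (ht : 0 < t) :
    DecaysExponentially P fun m => {ω | m * (∫ x, f x ∂μ + t) ≤ ∑ i ∈ range m, f (Ys i ω)} :=
  ⟨1, t ^ 2 / (2 * r ^ 2), one_pos, by positivity, fun m => by
    simpa only [one_mul] using measureReal_sum_ge_le_exp_of_iid hmeas hindep hlaw hf hfr ht.le m⟩

end Hoeffding

lemma sum_dist_le_sum_dist_add_card_mul_dist {ι X : Type*} [PseudoMetricSpace X]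
    (s : Finset ι) (x : ι → X) (a b : X) :
    ∑ i ∈ s, dist (x i) b ≤ ∑ i ∈ s, dist (x i) a + #s * dist a b := by
  calc ∑ i ∈ s, dist (x i) b ≤ ∑ i ∈ s, (dist (x i) a + dist a b) :=
        sum_le_sum fun i _ => dist_triangle _ _ _
    _ = ∑ i ∈ s, dist (x i) a + #s * dist a b := by
        rw [sum_add_distrib, sum_const, nsmul_eq_mul]

lemma neg_card_mul_dist_le_sum_dist_sub_dist {ι X : Type*} [PseudoMetricSpace X] (s : Finset ι)
    (x : ι → X) {a b : X} (hb : ∑ i ∈ s, dist (x i) b ≤ ∑ i ∈ s, dist (x i) a) (c : X) :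
    -(#s * dist b c) ≤ ∑ i ∈ s, (dist (x i) a - dist (x i) c) := by
  rw [sum_sub_distrib]
  linarith [sum_dist_le_sum_dist_add_card_mul_dist s x b c]

noncomputable def medianRisk {X : Type*} [PseudoMetricSpace X] [MeasurableSpace X]
    (μ : Measure X) (y : X) : ℝ :=
  ∫ x, dist x y ∂μ

section EmpiricalMedian

variable {X Ω : Type*} [MetricSpace X] [CompactSpace X] [MeasurableSpace X] [BorelSpace X]
  {μ : Measure X} [IsFiniteMeasure μ] [MeasurableSpace Ω] {P : Measure Ω}
  [IsProbabilityMeasure P] {Ys : ℕ → Ω → X}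

lemma decaysExponentially_dist_lt_half_medianRisk_sub (hmeas : ∀ i, Measurable (Ys i))
    (hindep : iIndepFun Ys P) (hlaw : ∀ i, P.map (Ys i) = μ) {ystar : X} {yhat : ℕ → Ω → X}
    (hmin : ∀ m ω, ∑ i ∈ range m, dist (Ys i ω) (yhat m ω) ≤ ∑ i ∈ range m, dist (Ys i ω) ystar)
    {y : X} (hlt : medianRisk μ ystar < medianRisk μ y) :
    DecaysExponentially P fun m =>
      {ω | dist (yhat m ω) y < (medianRisk μ y - medianRisk μ ystar) / 2} := by
  have hy : y ≠ ystar := by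
    rintro rfl
    exact lt_irrefl _ hlt
  have hbound : ∀ x, |dist x ystar - dist x y| ≤ nndist y ystar := fun x => by
    rw [coe_nndist, dist_comm x ystar, dist_comm x y, dist_comm y ystar]
    exact abs_dist_sub_le _ _ _
  refine (decaysExponentially_sum_ge_of_iid hmeas hindep hlaw (by fun_prop) hbound
    (dist_pos.mpr hy) (half_pos (sub_pos.mpr hlt))).mono fun m ω hω => ?_
  have hint : ∀ z : X, Integrable (fun x => dist x z) μ := fun z =>
    (continuous_id.dist continuous_const).integrable_of_hasCompactSupport
      (HasCompactSupport.of_compactSpace _)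
  have hz := neg_card_mul_dist_le_sum_dist_sub_dist (range m) (fun i => Ys i ω) (hmin m ω) y
  rw [card_range] at hz
  simp only [Set.mem_ofPred_eq, integral_sub (hint ystar) (hint y), medianRisk] at hω ⊢
  nlinarith [m.cast_nonneg (α := ℝ)]

end EmpiricalMedian

theorem stmt13_general {Ytil : Type*} [MetricSpace Ytil] [CompactSpace Ytil]
    [MeasurableSpace Ytil] [BorelSpace Ytil]
    (μ : Measure Ytil) [IsProbabilityMeasure μ] (ystar : Ytil)
    (huniq : ∀ y : Ytil, y ≠ ystar →
      (∫ y', dist y' ystar ∂μ) < ∫ y', dist y' y ∂μ)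
    {Ω : Type*} [MeasurableSpace Ω] (P : Measure Ω) [IsProbabilityMeasure P]
    (Ys : ℕ → Ω → Ytil) (hmeas : ∀ i, Measurable (Ys i))
    (hindep : iIndepFun Ys P)
    (hlaw : ∀ i, P.map (Ys i) = μ)
    (yhat : ℕ → Ω → Ytil)
    (hmin : ∀ m ω, ∀ y : Ytil,
      (∑ i ∈ Finset.range m, dist (Ys i ω) (yhat m ω)) / m ≤
        (∑ i ∈ Finset.range m, dist (Ys i ω) y) / m) :
    ∀ ε > (0 : ℝ), ∃ (M : ℕ) (K η : ℝ), 0 < K ∧ 0 < η ∧ ∀ m > M,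
      (P {ω | ε ≤ dist (yhat m ω) ystar}).toReal ≤ K * Real.exp (-(m : ℝ) * η) := by
  intro ε hε
  have hmin_sum : ∀ m ω, ∑ i ∈ range m, dist (Ys i ω) (yhat m ω) ≤
      ∑ i ∈ range m, dist (Ys i ω) ystar := by
    intro m ω
    -- at `m = 0`, `hmin` divides by zero and carries no information
    rcases m.eq_zero_or_pos with rfl | hm
    · simp
    · exact (div_le_div_iff_of_pos_right (by positivity)).mp (hmin m ω ystar)
  set S := {y | ε ≤ dist y ystar}
  have hgap : ∀ y ∈ S, medianRisk μ ystar < medianRisk μ y := fun y hy =>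
    huniq y (dist_pos.mp (hε.trans_le hy))
  have hS : IsCompact S := (isClosed_le continuous_const (by fun_prop)).isCompact
  obtain ⟨T, hTS, hcover⟩ := hS.elim_nhds_subcover
    (fun y => Metric.ball y ((medianRisk μ y - medianRisk μ ystar) / 2))
    fun y hy => Metric.ball_mem_nhds y (half_pos (sub_pos.mpr (hgap y hy)))
  have hdecay := decaysExponentially_biUnion T fun y hy =>
    decaysExponentially_dist_lt_half_medianRisk_sub hmeas hindep hlaw hmin_sum (hgap y (hTS y hy))
  obtain ⟨K, η, hK, hη, hbound⟩ := hdecay.mono fun m ω hω => by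
    simpa only [Set.mem_iUnion₂, Metric.mem_ball, Set.mem_ofPred_eq] using hcover hω
  exact ⟨0, K, η, hK, hη, fun m _ => hbound m⟩

/-- Consistency of the empirical geometric median with exponential rate
(main theorem): if y* is the unique population geometric median of μ on a
compact metric space and each Z_y = d(Y,y*) − d(Y,y) has everywhere-finite
moment generating function, then for i.i.d. samples with law μ and empirical
geometric medians ŷ_m, for every ε > 0 there are M, K > 0, η > 0 with
Pr(d(ŷ_m, y*) ≥ ε) ≤ K exp(−mη) for all m > M. -/
theorem stmt13 {Ytil : Type*} [MetricSpace Ytil] [CompactSpace Ytil]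
    [Nonempty Ytil] [MeasurableSpace Ytil] [BorelSpace Ytil]
    (μ : Measure Ytil) [IsProbabilityMeasure μ] (ystar : Ytil)
    (huniq : ∀ y : Ytil, y ≠ ystar →
      (∫ y', dist y' ystar ∂μ) < ∫ y', dist y' y ∂μ)
    (hmgf : ∀ y : Ytil, ∀ l : ℝ,
      Integrable (fun y' => Real.exp (l * (dist y' ystar - dist y' y))) μ)
    {Ω : Type*} [MeasurableSpace Ω] (P : Measure Ω) [IsProbabilityMeasure P]
    (Ys : ℕ → Ω → Ytil) (hmeas : ∀ i, Measurable (Ys i))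
    (hindep : iIndepFun Ys P)
    (hlaw : ∀ i, P.map (Ys i) = μ)
    (yhat : ℕ → Ω → Ytil)
    (hmin : ∀ m ω, ∀ y : Ytil,
      (∑ i ∈ Finset.range m, dist (Ys i ω) (yhat m ω)) / m ≤
        (∑ i ∈ Finset.range m, dist (Ys i ω) y) / m) :
    ∀ ε > (0 : ℝ), ∃ (M : ℕ) (K η : ℝ), 0 < K ∧ 0 < η ∧ ∀ m > M,
      (P {ω | ε ≤ dist (yhat m ω) ystar}).toReal ≤ K * Real.exp (-(m : ℝ) * η) :=
  stmt13_general μ ystar huniq P Ys hmeas hindep hlaw yhat hmin
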